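/- Let r > 0, k ∈ ℕ, and define the spiral S_r(θ) = r·(θ/2π)·(cos θ, sin θ) for θ ∈ [0, 2πk]. Then d_{r,k}(Δθ) = |S_r(2πk) − S_r(2πk − Δθ/2)| is continuous and strictly increasing in Δθ on (0, π), tends to 0 as Δθ → 0⁺, and tends to r·√(k² + (k − 1/4)²) as Δθ → π⁻. -/

import Mathlib

/-!
By the law of cosines, `‖S_r θ - S_r (θ - t)‖² = (r / 2π)² (θ² + (θ - t)² - 2θ(θ - t) cos t)`.
For `θ = 2πk` (in fact for any `θ ∉ (0, π)`) the derivative in `t` of the bracket is positive on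
`(0, π/2)`, so the distance increases strictly while `t = Δθ / 2` runs through `(0, π/2)`; the two
limits are the values of the continuous distance at `t = 0` and at the quarter turn `t = π/2`.
-/

open Real Filter

/-- The Archimedean spiral with separation `r` between turns. -/
noncomputable def spiral (r θ : ℝ) : EuclideanSpace ℝ (Fin 2) :=
  (WithLp.equiv 2 (Fin 2 → ℝ)).symm
    ![r * (θ / (2 * π)) * Real.cos θ, r * (θ / (2 * π)) * Real.sin θ]

theorem hasDerivAt_cosine_chord (θ t : ℝ) :
    HasDerivAt (fun t => θ ^ 2 + (θ - t) ^ 2 - 2 * θ * (θ - t) * cos t)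
      (2 * t + 2 * θ * ((θ - t) * sin t - (1 - cos t))) t := by
  have hlin := (hasDerivAt_id' t).const_sub θ
  refine (((hlin.fun_pow 2).const_add (θ ^ 2)).fun_sub
    ((hlin.const_mul (2 * θ)).fun_mul (hasDerivAt_cos t))).congr_deriv ?_
  norm_num
  ring

theorem strictMonoOn_cosine_chord {θ : ℝ} (hθ : θ ∉ Set.Ioo 0 π) :
    StrictMonoOn (fun t => θ ^ 2 + (θ - t) ^ 2 - 2 * θ * (θ - t) * cos t) (Set.Icc 0 (π / 2)) := by
  refine strictMonoOn_of_hasDerivWithinAt_pos (convex_Icc _ _) (by fun_prop)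
    (fun t _ => (hasDerivAt_cosine_chord θ t).hasDerivWithinAt) ?_
  rw [interior_Icc]
  rintro t ⟨ht₀, htπ⟩
  suffices 0 ≤ θ * ((θ - t) * sin t - (1 - cos t)) by linarith
  have hsin : 0 < sin t := sin_pos_of_pos_of_lt_pi ht₀ (by linarith [pi_pos])
  rw [Set.mem_Ioo, not_and_or, not_lt, not_lt] at hθ
  obtain hθ | hθ := hθ
  · have := cos_le_one t
    exact mul_nonneg_of_nonpos_of_nonpos hθ (by nlinarith)
  · -- `1 - cos t ≤ t² / 2 ≤ 2 t (θ - t) / π ≤ (θ - t) sin t`, the last step by Jordan's inequality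
    have hcos := one_sub_sq_div_two_le_cos (x := t)
    have hjordan := mul_le_sin ht₀.le htπ.le
    have hquad : t ^ 2 / 2 ≤ 2 / π * t * (θ - t) := by
      rw [div_mul_eq_mul_div, div_mul_eq_mul_div, div_le_div_iff₀ two_pos pi_pos]
      nlinarith [pi_le_four]
    have := mul_le_mul_of_nonneg_right hjordan (by linarith : 0 ≤ θ - t)
    exact mul_nonneg (by linarith [pi_pos]) (by nlinarith)

@[fun_prop]
theorem continuous_spiral (r : ℝ) : Continuous (spiral r) :=
  (PiLp.continuous_toLp 2 _).comp <| by
    refine .matrixVecCons ?_ (.matrixVecCons ?_ continuous_const) <;> fun_prop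

theorem norm_spiral_sub_spiral_sq (r θ φ : ℝ) :
    ‖spiral r θ - spiral r φ‖ ^ 2 =
      (r / (2 * π)) ^ 2 * (θ ^ 2 + φ ^ 2 - 2 * θ * φ * cos (θ - φ)) := by
  simp only [spiral, EuclideanSpace.norm_sq_eq, Fin.sum_univ_two, PiLp.sub_apply,
    WithLp.equiv_symm_apply, Matrix.cons_val_zero, Matrix.cons_val_one, norm_eq_abs, sq_abs,
    cos_sub]
  linear_combination (r / (2 * π)) ^ 2 * (θ ^ 2 * sin_sq_add_cos_sq θ + φ ^ 2 * sin_sq_add_cos_sq φ)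

theorem strictMonoOn_norm_spiral_sub_spiral {r θ : ℝ} (hr : 0 < r) (hθ : θ ∉ Set.Ioo 0 π) :
    StrictMonoOn (fun t => ‖spiral r θ - spiral r (θ - t)‖) (Set.Icc 0 (π / 2)) := by
  intro s hs t ht hst
  refine lt_of_pow_lt_pow_left₀ 2 (norm_nonneg _) ?_
  simp only [norm_spiral_sub_spiral_sq, sub_sub_cancel]
  exact mul_lt_mul_of_pos_left (strictMonoOn_cosine_chord hθ hs ht hst) (by positivity)

theorem norm_spiral_sub_spiral_quarter_turn {r : ℝ} (hr : 0 ≤ r) (x : ℝ) :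
    ‖spiral r (2 * π * x) - spiral r (2 * π * x - π / 2)‖ = r * √(x ^ 2 + (x - 1 / 4) ^ 2) := by
  rw [← sq_eq_sq₀ (norm_nonneg _) (by positivity), norm_spiral_sub_spiral_sq, mul_pow r,
    sq_sqrt (by positivity), sub_sub_cancel, cos_pi_div_two]
  field_simp
  ring

/-- The function `Δθ ↦ |S_r(2πk) − S_r(2πk − Δθ/2)|` is continuous and strictly increasing
on `(0, π)`, tends to `0` as `Δθ → 0⁺` and to `r √(k² + (k − 1/4)²)` as `Δθ → π⁻`. -/
theorem spiral_endpoint_distance (r : ℝ) (hr : 0 < r) (k : ℕ) :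
    ContinuousOn (fun Δ : ℝ => ‖spiral r (2 * π * k) - spiral r (2 * π * k - Δ / 2)‖)
      (Set.Ioo 0 π) ∧
    StrictMonoOn (fun Δ : ℝ => ‖spiral r (2 * π * k) - spiral r (2 * π * k - Δ / 2)‖)
      (Set.Ioo 0 π) ∧
    Tendsto (fun Δ : ℝ => ‖spiral r (2 * π * k) - spiral r (2 * π * k - Δ / 2)‖)
      (nhdsWithin 0 (Set.Ioi 0)) (nhds 0) ∧
    Tendsto (fun Δ : ℝ => ‖spiral r (2 * π * k) - spiral r (2 * π * k - Δ / 2)‖)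
      (nhdsWithin π (Set.Iio π)) (nhds (r * Real.sqrt ((k : ℝ) ^ 2 + ((k : ℝ) - 1 / 4) ^ 2))) := by
  have hcont : Continuous fun Δ : ℝ => ‖spiral r (2 * π * k) - spiral r (2 * π * k - Δ / 2)‖ := by
    fun_prop
  have hk : 2 * π * k ∉ Set.Ioo 0 π := by
    rintro ⟨hpos, hlt⟩
    have : (1 : ℝ) ≤ k := by exact_mod_cast Nat.one_le_iff_ne_zero.mpr (by rintro rfl; simp at hpos)
    nlinarith [pi_pos]
  have hhalf : Set.MapsTo (· / 2) (Set.Ioo 0 π) (Set.Icc 0 (π / 2)) := fun Δ hΔ =>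
    ⟨by linarith [hΔ.1], by linarith [hΔ.2]⟩
  refine ⟨hcont.continuousOn, ?_, ?_, ?_⟩
  · exact (strictMonoOn_norm_spiral_sub_spiral hr hk).comp
      (fun _ _ _ _ h => div_lt_div_of_pos_right h two_pos) hhalf
  · simpa using (hcont.tendsto 0).mono_left nhdsWithin_le_nhds
  · simpa [norm_spiral_sub_spiral_quarter_turn hr.le] using
      (hcont.tendsto π).mono_left nhdsWithin_le_nhds
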